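/- arXiv:0806.1768 — 2 statements merged into one kernel-verified Lean document; each statement's English description precedes it below -/
import Mathlib

section
/- Consensus using only read-all operations is impossible in a two-node system: there is no wait-free protocol, in which each process's steps are either (a) atomic reads of all variables (invisible to the other process) or (b) writes to its own local variables combined with local computation, satisfying validity, agreement, and termination for inputs in {0,1}. -/
/-- A deterministic wait-free two-process protocol in which each step of a
process is either an atomic read-all (copying all shared variables into
private state without modifying shared state) or a write to the process's
own shared variables combined with local computation. -/
structure ReadAllProtocol where
  Vp : Type          -- shared variables located at p (written only by p)
  Vq : Type          -- shared variables located at q (written only by q)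
  Lp : Type          -- private state of p
  Lq : Type          -- private state of q
  initVp : Vp
  initVq : Vq
  initLp : Bool → Lp -- initial private state from p's input bit
  initLq : Bool → Lq
  isReadP : Lp → Bool            -- whether p's next step is a read-all
  readP : Lp → Vp → Vq → Lp      -- read-all: shared state unchanged
  writeP : Lp → Vp → Lp × Vp     -- write own variables + local computation
  isReadQ : Lq → Bool
  readQ : Lq → Vq → Vp → Lq
  writeQ : Lq → Vq → Lq × Vq
  decP : Lp → Option Bool        -- write-once decision (none = ω)
  decQ : Lq → Option Bool
  boundP : ℕ
  boundQ : ℕ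

namespace ReadAllProtocol

def State (P : ReadAllProtocol) := P.Vp × P.Vq × P.Lp × P.Lq

def stepP (P : ReadAllProtocol) (s : P.State) : P.State :=
  if P.isReadP s.2.2.1 then (s.1, s.2.1, P.readP s.2.2.1 s.1 s.2.1, s.2.2.2)
  else ((P.writeP s.2.2.1 s.1).2, s.2.1, (P.writeP s.2.2.1 s.1).1, s.2.2.2)

def stepQ (P : ReadAllProtocol) (s : P.State) : P.State :=
  if P.isReadQ s.2.2.2 then (s.1, s.2.1, s.2.2.1, P.readQ s.2.2.2 s.2.1 s.1)
  else (s.1, (P.writeQ s.2.2.2 s.2.1).2, s.2.2.1, (P.writeQ s.2.2.2 s.2.1).1)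

/-- Run the protocol from inputs `inp`, `inq` under a schedule
(`true` = p takes the next step, `false` = q does). -/
def run (P : ReadAllProtocol) (inp inq : Bool) (sched : List Bool) : P.State :=
  sched.foldl (fun s b => if b then P.stepP s else P.stepQ s)
    (P.initVp, P.initVq, P.initLp inp, P.initLq inq)

/-- Validity: any decision equals some process's input. -/
def Valid (P : ReadAllProtocol) : Prop :=
  ∀ inp inq : Bool, ∀ sched : List Bool, ∀ d : Bool,
    (P.decP (P.run inp inq sched).2.2.1 = some d → d = inp ∨ d = inq) ∧
    (P.decQ (P.run inp inq sched).2.2.2 = some d → d = inp ∨ d = inq)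

/-- Agreement: no two processes decide different values. -/
def Agree (P : ReadAllProtocol) : Prop :=
  ∀ inp inq : Bool, ∀ sched : List Bool, ∀ dp dq : Bool,
    P.decP (P.run inp inq sched).2.2.1 = some dp →
    P.decQ (P.run inp inq sched).2.2.2 = some dq → dp = dq

/-- Wait-free termination: each process decides within a bounded number of
its own steps, regardless of the other's scheduling. -/
def WaitFree (P : ReadAllProtocol) : Prop :=
  ∀ inp inq : Bool, ∀ sched : List Bool,
    (P.boundP ≤ sched.count true →
      ∃ d, P.decP (P.run inp inq sched).2.2.1 = some d) ∧
    (P.boundQ ≤ sched.count false →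
      ∃ d, P.decQ (P.run inp inq sched).2.2.2 = some d)

end ReadAllProtocol

namespace ReadAllImposs

variable (P : ReadAllProtocol)

def stp (x : P.State) (b : Bool) : P.State := if b then P.stepP x else P.stepQ x

lemma run_eq (inp inq : Bool) (s : List Bool) :
    P.run inp inq s = s.foldl (stp P) (P.initVp, P.initVq, P.initLp inp, P.initLq inq) := rfl

lemma run_concat (inp inq : Bool) (s : List Bool) (b : Bool) :
    P.run inp inq (s ++ [b]) = stp P (P.run inp inq s) b := by
  exact List.foldl_append (f := stp P) (l := s) (l' := [b])

def st (s : List Bool) : P.State := P.run false true s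
def dP (s : List Bool) : Option Bool := P.decP (st P s).2.2.1
def dQ (s : List Bool) : Option Bool := P.decQ (st P s).2.2.2

lemma st_append (s t : List Bool) : st P (s ++ t) = t.foldl (stp P) (st P s) := by
  exact List.foldl_append (f := stp P) (l := s) (l' := t)

lemma st_concat (s : List Bool) (b : Bool) : st P (s ++ [b]) = stp P (st P s) b := by
  simp [st_append]

@[simp] lemma stp_true (x : P.State) : stp P x true = P.stepP x := rfl
@[simp] lemma stp_false (x : P.State) : stp P x false = P.stepQ x := rfl

lemma stepP_Vq (x : P.State) : (P.stepP x).2.1 = x.2.1 := by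
  unfold ReadAllProtocol.stepP; cases hc : P.isReadP x.2.2.1 <;> simp [hc]
lemma stepP_Lq (x : P.State) : (P.stepP x).2.2.2 = x.2.2.2 := by
  unfold ReadAllProtocol.stepP; cases hc : P.isReadP x.2.2.1 <;> simp [hc]
lemma stepQ_Vp (x : P.State) : (P.stepQ x).1 = x.1 := by
  unfold ReadAllProtocol.stepQ; cases hc : P.isReadQ x.2.2.2 <;> simp [hc]
lemma stepQ_Lp (x : P.State) : (P.stepQ x).2.2.1 = x.2.2.1 := by
  unfold ReadAllProtocol.stepQ; cases hc : P.isReadQ x.2.2.2 <;> simp [hc]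

lemma dP_concat_false (s : List Bool) : dP P (s ++ [false]) = dP P s := by
  simp [dP, st_concat, stepQ_Lp]
lemma dQ_concat_true (s : List Bool) : dQ P (s ++ [true]) = dQ P s := by
  simp [dQ, st_concat, stepP_Lq]

lemma cons_shift (s : List Bool) (b : Bool) (t : List Bool) :
    s ++ (b :: t) = (s ++ [b]) ++ t := by simp

lemma append_rep_succ (s : List Bool) (b : Bool) (k : ℕ) :
    s ++ List.replicate (k+1) b = (s ++ [b]) ++ List.replicate k b := by
  rw [List.replicate_succ]; simp

lemma dP_falses (k : ℕ) : ∀ s, dP P (s ++ List.replicate k false) = dP P s := by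
  induction k with
  | zero => simp
  | succ k ih =>
    intro s
    rw [append_rep_succ, ih, dP_concat_false]

lemma dQ_trues (k : ℕ) : ∀ s, dQ P (s ++ List.replicate k true) = dQ P s := by
  induction k with
  | zero => simp
  | succ k ih =>
    intro s
    rw [append_rep_succ, ih, dQ_concat_true]

def Allowed : List Bool → List Bool → Prop
  | _, [] => True
  | s, b :: t => (if b then dP P s = none else dQ P s = none) ∧ Allowed (s ++ [b]) t

@[simp] lemma allowed_nil (s : List Bool) : Allowed P s [] := trivial

lemma allowed_cons {s : List Bool} {b : Bool} {t : List Bool} :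
    Allowed P s (b :: t) ↔
      (if b then dP P s = none else dQ P s = none) ∧ Allowed P (s ++ [b]) t := Iff.rfl

lemma allowed_append : ∀ (t : List Bool) (s u : List Bool),
    Allowed P s t → Allowed P (s ++ t) u → Allowed P s (t ++ u) := by
  intro t
  induction t with
  | nil => intro s u _ h; simpa using h
  | cons b t ih =>
    intro s u h1 h2
    rw [allowed_cons] at h1
    rw [List.cons_append, allowed_cons]
    refine ⟨h1.1, ih (s ++ [b]) u h1.2 ?_⟩
    rwa [← cons_shift]

lemma allowed_trues : ∀ (j : ℕ) (s : List Bool),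
    (∀ i < j, dP P (s ++ List.replicate i true) = none) →
    Allowed P s (List.replicate j true) := by
  intro j
  induction j with
  | zero => intros; simp
  | succ j ih =>
    intro s h
    rw [List.replicate_succ, allowed_cons]
    refine ⟨by simpa using h 0 (Nat.succ_pos j), ih (s ++ [true]) ?_⟩
    intro i hi
    have := h (i+1) (by omega)
    rwa [append_rep_succ] at this

lemma allowed_falses : ∀ (k : ℕ) (s : List Bool),
    (∀ i < k, dQ P (s ++ List.replicate i false) = none) →
    Allowed P s (List.replicate k false) := by
  intro k
  induction k with
  | zero => intros; simp
  | succ k ih =>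
    intro s h
    rw [List.replicate_succ, allowed_cons]
    refine ⟨by simpa using h 0 (Nat.succ_pos k), ih (s ++ [false]) ?_⟩
    intro i hi
    have := h (i+1) (by omega)
    rwa [append_rep_succ] at this

lemma soloP (hW : P.WaitFree) (s : List Bool) :
    ∃ j d, (∀ i < j, dP P (s ++ List.replicate i true) = none) ∧
      dP P (s ++ List.replicate j true) = some d := by
  classical
  have hex : ∃ j, dP P (s ++ List.replicate j true) ≠ none := by
    obtain ⟨d, hd⟩ := (hW false true (s ++ List.replicate P.boundP true)).1
      (by simp [List.count_append])
    refine ⟨P.boundP, ?_⟩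
    have h' : dP P (s ++ List.replicate P.boundP true) = some d := hd
    rw [h']; simp
  obtain ⟨d, hd⟩ := Option.ne_none_iff_exists'.mp (Nat.find_spec hex)
  exact ⟨Nat.find hex, d, fun i hi => by simpa using Nat.find_min hex hi, hd⟩

lemma soloQ (hW : P.WaitFree) (s : List Bool) :
    ∃ k e, (∀ i < k, dQ P (s ++ List.replicate i false) = none) ∧
      dQ P (s ++ List.replicate k false) = some e := by
  classical
  have hex : ∃ k, dQ P (s ++ List.replicate k false) ≠ none := by
    obtain ⟨e, hd⟩ := (hW false true (s ++ List.replicate P.boundQ false)).2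
      (by simp [List.count_append])
    refine ⟨P.boundQ, ?_⟩
    have h' : dQ P (s ++ List.replicate P.boundQ false) = some e := hd
    rw [h']; simp
  obtain ⟨d, hd⟩ := Option.ne_none_iff_exists'.mp (Nat.find_spec hex)
  exact ⟨Nat.find hex, d, fun i hi => by simpa using Nat.find_min hex hi, hd⟩

lemma finishP (hA : P.Agree) (hW : P.WaitFree) (s : List Bool) (d : Bool)
    (h : dP P s = some d) :
    ∃ u, Allowed P s u ∧ dP P (s ++ u) = some d ∧ dQ P (s ++ u) = some d := by
  obtain ⟨k, e, hmin, hk⟩ := soloQ P hW s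
  have hp : dP P (s ++ List.replicate k false) = some d := by
    rw [dP_falses]; exact h
  have hde : d = e := hA false true (s ++ List.replicate k false) d e hp hk
  exact ⟨List.replicate k false, allowed_falses P k s hmin, hp, hde ▸ hk⟩

lemma finishQ (hA : P.Agree) (hW : P.WaitFree) (s : List Bool) (e : Bool)
    (h : dQ P s = some e) :
    ∃ u, Allowed P s u ∧ dP P (s ++ u) = some e ∧ dQ P (s ++ u) = some e := by
  obtain ⟨j, d, hmin, hj⟩ := soloP P hW s
  have hq : dQ P (s ++ List.replicate j true) = some e := by
    rw [dQ_trues]; exact h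
  have hde : d = e := hA false true (s ++ List.replicate j true) d e hj hq
  exact ⟨List.replicate j true, allowed_trues P j s hmin, hde ▸ hj, hq⟩

def Reach (s : List Bool) (v : Bool) : Prop :=
  ∃ t, Allowed P s t ∧ dP P (s ++ t) = some v ∧ dQ P (s ++ t) = some v

lemma reach_exists (hA : P.Agree) (hW : P.WaitFree) (s : List Bool) :
    ∃ e, Reach P s e := by
  obtain ⟨j, d, hmin, hj⟩ := soloP P hW s
  obtain ⟨u, hu, hp, hq⟩ := finishP P hA hW (s ++ List.replicate j true) d hj
  exact ⟨d, List.replicate j true ++ u,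
    allowed_append P _ s u (allowed_trues P j s hmin) hu,
    by rwa [← List.append_assoc], by rwa [← List.append_assoc]⟩

lemma persistP : ∀ (t s : List Bool) (d : Bool),
    dP P s = some d → Allowed P s t → dP P (s ++ t) = some d := by
  intro t
  induction t with
  | nil => intro s d h _; simpa using h
  | cons b t ih =>
    intro s d h ha
    rw [allowed_cons] at ha
    obtain ⟨hc, ha'⟩ := ha
    cases b with
    | false =>
      rw [cons_shift]
      exact ih _ d (by rw [dP_concat_false]; exact h) ha'
    | true =>
      simp at hc
      rw [h] at hc
      cases hc

lemma persistQ : ∀ (t s : List Bool) (d : Bool),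
    dQ P s = some d → Allowed P s t → dQ P (s ++ t) = some d := by
  intro t
  induction t with
  | nil => intro s d h _; simpa using h
  | cons b t ih =>
    intro s d h ha
    rw [allowed_cons] at ha
    obtain ⟨hc, ha'⟩ := ha
    cases b with
    | true =>
      rw [cons_shift]
      exact ih _ d (by rw [dQ_concat_true]; exact h) ha'
    | false =>
      simp at hc
      rw [h] at hc
      cases hc

lemma reach_of_decP (s : List Bool) (d v : Bool) (h : dP P s = some d) :
    Reach P s v → v = d := by
  rintro ⟨t, ha, hp, -⟩
  have := persistP P t s d h ha
  rw [hp] at this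
  exact (Option.some_inj.mp this)

lemma reach_of_decQ (s : List Bool) (d v : Bool) (h : dQ P s = some d) :
    Reach P s v → v = d := by
  rintro ⟨t, ha, -, hq⟩
  have := persistQ P t s d h ha
  rw [hq] at this
  exact (Option.some_inj.mp this)


lemma stepP_psim {x y : P.State} (h1 : x.1 = y.1) (h2 : x.2.1 = y.2.1)
    (h3 : x.2.2.1 = y.2.2.1) :
    (P.stepP x).1 = (P.stepP y).1 ∧ (P.stepP x).2.1 = (P.stepP y).2.1 ∧
      (P.stepP x).2.2.1 = (P.stepP y).2.2.1 := by
  unfold ReadAllProtocol.stepP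
  rw [h1, h2, h3]
  cases hc : P.isReadP y.2.2.1 <;> simp [hc]

lemma stepQ_qsim {x y : P.State} (h1 : x.1 = y.1) (h2 : x.2.1 = y.2.1)
    (h3 : x.2.2.2 = y.2.2.2) :
    (P.stepQ x).1 = (P.stepQ y).1 ∧ (P.stepQ x).2.1 = (P.stepQ y).2.1 ∧
      (P.stepQ x).2.2.2 = (P.stepQ y).2.2.2 := by
  unfold ReadAllProtocol.stepQ
  rw [h1, h2, h3]
  cases hc : P.isReadQ y.2.2.2 <;> simp [hc]

lemma stepP_read_qsim {x : P.State} (h : P.isReadP x.2.2.1 = true) :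
    (P.stepP x).1 = x.1 ∧ (P.stepP x).2.1 = x.2.1 ∧ (P.stepP x).2.2.2 = x.2.2.2 := by
  unfold ReadAllProtocol.stepP; simp [h]

lemma stepQ_read_psim {x : P.State} (h : P.isReadQ x.2.2.2 = true) :
    (P.stepQ x).1 = x.1 ∧ (P.stepQ x).2.1 = x.2.1 ∧ (P.stepQ x).2.2.1 = x.2.2.1 := by
  unfold ReadAllProtocol.stepQ; simp [h]

lemma write_comm {x : P.State} (hp : P.isReadP x.2.2.1 = false)
    (hq : P.isReadQ x.2.2.2 = false) :
    P.stepQ (P.stepP x) = P.stepP (P.stepQ x) := by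
  unfold ReadAllProtocol.stepP ReadAllProtocol.stepQ
  simp [hp, hq]; rfl

lemma read_transfer_q (s : List Bool) (h : P.isReadP (st P s).2.2.1 = true) :
    ∀ i, (st P (s ++ [true] ++ List.replicate i false)).1
           = (st P (s ++ List.replicate i false)).1
       ∧ (st P (s ++ [true] ++ List.replicate i false)).2.1
           = (st P (s ++ List.replicate i false)).2.1
       ∧ (st P (s ++ [true] ++ List.replicate i false)).2.2.2
           = (st P (s ++ List.replicate i false)).2.2.2 := by
  intro i
  induction i with
  | zero =>
    simp only [List.replicate, List.append_nil]
    rw [st_concat]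
    simpa using stepP_read_qsim P h
  | succ i ih =>
    have e1 : s ++ [true] ++ List.replicate (i+1) false
        = (s ++ [true] ++ List.replicate i false) ++ [false] := by
      rw [List.replicate_succ']; simp
    have e2 : s ++ List.replicate (i+1) false
        = (s ++ List.replicate i false) ++ [false] := by
      rw [List.replicate_succ']; simp
    rw [e1, e2, st_concat, st_concat]
    simpa using stepQ_qsim P ih.1 ih.2.1 ih.2.2

lemma read_transfer_p (s : List Bool) (h : P.isReadQ (st P s).2.2.2 = true) :
    ∀ i, (st P (s ++ [false] ++ List.replicate i true)).1
           = (st P (s ++ List.replicate i true)).1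
       ∧ (st P (s ++ [false] ++ List.replicate i true)).2.1
           = (st P (s ++ List.replicate i true)).2.1
       ∧ (st P (s ++ [false] ++ List.replicate i true)).2.2.1
           = (st P (s ++ List.replicate i true)).2.2.1 := by
  intro i
  induction i with
  | zero =>
    simp only [List.replicate, List.append_nil]
    rw [st_concat]
    simpa using stepQ_read_psim P h
  | succ i ih =>
    have e1 : s ++ [false] ++ List.replicate (i+1) true
        = (s ++ [false] ++ List.replicate i true) ++ [true] := by
      rw [List.replicate_succ']; simp
    have e2 : s ++ List.replicate (i+1) true
        = (s ++ List.replicate i true) ++ [true] := by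
      rw [List.replicate_succ']; simp
    rw [e1, e2, st_concat, st_concat]
    simpa using stepP_psim P ih.1 ih.2.1 ih.2.2

lemma st_transfer (a b : List Bool) (h : st P a = st P b) (t : List Bool) :
    st P (a ++ t) = st P (b ++ t) := by
  rw [st_append, st_append, h]

lemma allowed_transfer : ∀ (t a b : List Bool), st P a = st P b →
    Allowed P a t → Allowed P b t := by
  intro t
  induction t with
  | nil => intros; simp
  | cons c t ih =>
    intro a b h ha
    rw [allowed_cons] at ha
    obtain ⟨hc, ha'⟩ := ha
    have hd : dP P a = dP P b := by unfold dP; rw [h]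
    have hq : dQ P a = dQ P b := by unfold dQ; rw [h]
    rw [allowed_cons]
    refine ⟨?_, ih (a ++ [c]) (b ++ [c]) (st_transfer P a b h [c]) ha'⟩
    cases c
    · simpa [hq] using hc
    · simpa [hd] using hc

lemma crux (hA : P.Agree) (hW : P.WaitFree) (s : List Bool)
    (h1 : dP P s = none) (h2 : dQ P s = none) :
    ∃ e, Reach P (s ++ [true]) e ∧ Reach P (s ++ [false]) e := by
  by_cases hrp : P.isReadP (st P s).2.2.1 = true
  · -- p's pending step is a read: invisible to q
    obtain ⟨k, e, hmin, hk⟩ := soloQ P hW s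
    have hk1 : 1 ≤ k := by
      rcases Nat.eq_zero_or_pos k with h0 | h0
      · subst h0; simp at hk; rw [h2] at hk; cases hk
      · exact h0
    have htr := read_transfer_q P s hrp
    have hdtr : ∀ i, dQ P (s ++ [true] ++ List.replicate i false)
        = dQ P (s ++ List.replicate i false) := by
      intro i; unfold dQ; rw [(htr i).2.2]
    refine ⟨e, ?_, ?_⟩
    · -- from s ++ [true]
      have hmin' : ∀ i < k, dQ P ((s ++ [true]) ++ List.replicate i false) = none := by
        intro i hi; rw [show (s ++ [true]) ++ List.replicate i false
          = s ++ [true] ++ List.replicate i false from rfl, hdtr]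
        exact hmin i hi
      have hk' : dQ P ((s ++ [true]) ++ List.replicate k false) = some e := by
        rw [show (s ++ [true]) ++ List.replicate k false
          = s ++ [true] ++ List.replicate k false from rfl, hdtr]
        exact hk
      obtain ⟨u, hu, hp', hq'⟩ := finishQ P hA hW ((s ++ [true]) ++ List.replicate k false) e hk'
      exact ⟨List.replicate k false ++ u,
        allowed_append P _ _ u (allowed_falses P k (s ++ [true]) hmin') hu,
        by rwa [← List.append_assoc], by rwa [← List.append_assoc]⟩
    · -- from s ++ [false]
      have heq : (s ++ [false]) ++ List.replicate (k-1) false = s ++ List.replicate k false := by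
        conv_rhs => rw [← Nat.succ_pred_eq_of_pos hk1]
        rw [List.replicate_succ]; simp
      have hmin'' : ∀ i < k - 1, dQ P ((s ++ [false]) ++ List.replicate i false) = none := by
        intro i hi
        have e2 : (s ++ [false]) ++ List.replicate i false = s ++ List.replicate (i+1) false := by
          rw [List.replicate_succ]; simp
        rw [e2]; exact hmin (i+1) (by omega)
      obtain ⟨u', hu', hp', hq'⟩ := finishQ P hA hW (s ++ List.replicate k false) e hk
      refine ⟨List.replicate (k-1) false ++ u', ?_, ?_, ?_⟩
      · refine allowed_append P _ _ u' (allowed_falses P (k-1) (s ++ [false]) hmin'') ?_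
        rwa [heq]
      · rw [← List.append_assoc, heq]; exact hp'
      · rw [← List.append_assoc, heq]; exact hq'
  · by_cases hrq : P.isReadQ (st P s).2.2.2 = true
    · -- q's pending step is a read: invisible to p
      obtain ⟨j, e, hmin, hj⟩ := soloP P hW s
      have hj1 : 1 ≤ j := by
        rcases Nat.eq_zero_or_pos j with h0 | h0
        · subst h0; simp at hj; rw [h1] at hj; cases hj
        · exact h0
      have htr := read_transfer_p P s hrq
      have hdtr : ∀ i, dP P (s ++ [false] ++ List.replicate i true)
          = dP P (s ++ List.replicate i true) := by
        intro i; unfold dP; rw [(htr i).2.2]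
      refine ⟨e, ?_, ?_⟩
      · -- from s ++ [true]
        have heq : (s ++ [true]) ++ List.replicate (j-1) true = s ++ List.replicate j true := by
          conv_rhs => rw [← Nat.succ_pred_eq_of_pos hj1]
          rw [List.replicate_succ]; simp
        have hmin'' : ∀ i < j - 1, dP P ((s ++ [true]) ++ List.replicate i true) = none := by
          intro i hi
          have e2 : (s ++ [true]) ++ List.replicate i true = s ++ List.replicate (i+1) true := by
            rw [List.replicate_succ]; simp
          rw [e2]; exact hmin (i+1) (by omega)
        obtain ⟨u', hu', hp', hq'⟩ := finishP P hA hW (s ++ List.replicate j true) e hj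
        refine ⟨List.replicate (j-1) true ++ u', ?_, ?_, ?_⟩
        · refine allowed_append P _ _ u' (allowed_trues P (j-1) (s ++ [true]) hmin'') ?_
          rwa [heq]
        · rw [← List.append_assoc, heq]; exact hp'
        · rw [← List.append_assoc, heq]; exact hq'
      · -- from s ++ [false]
        have hmin' : ∀ i < j, dP P ((s ++ [false]) ++ List.replicate i true) = none := by
          intro i hi; rw [show (s ++ [false]) ++ List.replicate i true
            = s ++ [false] ++ List.replicate i true from rfl, hdtr]
          exact hmin i hi
        have hj' : dP P ((s ++ [false]) ++ List.replicate j true) = some e := by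
          rw [show (s ++ [false]) ++ List.replicate j true
            = s ++ [false] ++ List.replicate j true from rfl, hdtr]
          exact hj
        obtain ⟨u, hu, hp', hq'⟩ := finishP P hA hW ((s ++ [false]) ++ List.replicate j true) e hj'
        exact ⟨List.replicate j true ++ u,
          allowed_append P _ _ u (allowed_trues P j (s ++ [false]) hmin') hu,
          by rwa [← List.append_assoc], by rwa [← List.append_assoc]⟩
    · -- both pending steps are writes: they commute
      have hrp' : P.isReadP (st P s).2.2.1 = false := by simpa using hrp
      have hrq' : P.isReadQ (st P s).2.2.2 = false := by simpa using hrq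
      have hcomm : st P (s ++ [true, false]) = st P (s ++ [false, true]) := by
        have e1 : s ++ [true, false] = (s ++ [true]) ++ [false] := by simp
        have e2 : s ++ [false, true] = (s ++ [false]) ++ [true] := by simp
        rw [e1, e2, st_concat, st_concat, st_concat, st_concat]
        simpa using write_comm P hrp' hrq'
      obtain ⟨e, t, ht, hp', hq'⟩ := reach_exists P hA hW (s ++ [true, false])
      have e3 : (s ++ [true]) ++ [false] = s ++ [true, false] := by simp
      have e4 : (s ++ [false]) ++ [true] = s ++ [false, true] := by simp
      refine ⟨e, ⟨false :: t, ?_, ?_, ?_⟩, ⟨true :: t, ?_, ?_, ?_⟩⟩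
      · rw [allowed_cons]
        refine ⟨by simpa [dQ_concat_true] using h2, ?_⟩
        rw [e3]; exact ht
      · rw [show (s ++ [true]) ++ (false :: t) = (s ++ [true, false]) ++ t by simp]
        exact hp'
      · rw [show (s ++ [true]) ++ (false :: t) = (s ++ [true, false]) ++ t by simp]
        exact hq'
      · rw [allowed_cons]
        refine ⟨by simpa [dP_concat_false] using h1, ?_⟩
        rw [e4]
        exact allowed_transfer P t _ _ hcomm ht
      · rw [show (s ++ [false]) ++ (true :: t) = (s ++ [false, true]) ++ t by simp]
        unfold dP
        rw [← st_transfer P _ _ hcomm t]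
        exact hp'
      · rw [show (s ++ [false]) ++ (true :: t) = (s ++ [false, true]) ++ t by simp]
        unfold dQ
        rw [← st_transfer P _ _ hcomm t]
        exact hq'

lemma trues_psim (inp inq inq' : Bool) : ∀ j,
    (P.run inp inq (List.replicate j true)).1 = (P.run inp inq' (List.replicate j true)).1
  ∧ (P.run inp inq (List.replicate j true)).2.1 = (P.run inp inq' (List.replicate j true)).2.1
  ∧ (P.run inp inq (List.replicate j true)).2.2.1
      = (P.run inp inq' (List.replicate j true)).2.2.1 := by
  intro j
  induction j with
  | zero => exact ⟨rfl, rfl, rfl⟩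
  | succ j ih =>
    rw [List.replicate_succ', run_concat, run_concat]
    simpa using stepP_psim P ih.1 ih.2.1 ih.2.2

lemma falses_qsim (inp inp' inq : Bool) : ∀ k,
    (P.run inp inq (List.replicate k false)).1 = (P.run inp' inq (List.replicate k false)).1
  ∧ (P.run inp inq (List.replicate k false)).2.1 = (P.run inp' inq (List.replicate k false)).2.1
  ∧ (P.run inp inq (List.replicate k false)).2.2.2
      = (P.run inp' inq (List.replicate k false)).2.2.2 := by
  intro k
  induction k with
  | zero => exact ⟨rfl, rfl, rfl⟩
  | succ k ih =>
    rw [List.replicate_succ', run_concat, run_concat]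
    simpa using stepQ_qsim P ih.1 ih.2.1 ih.2.2

lemma reach_false (hV : P.Valid) (hA : P.Agree) (hW : P.WaitFree) :
    Reach P [] false := by
  obtain ⟨j, d, hmin, hj⟩ := soloP P hW []
  have hj0 : dP P (List.replicate j true) = some d := by simpa using hj
  have hsim := (trues_psim P false true false j).2.2
  have hj' : P.decP (P.run false false (List.replicate j true)).2.2.1 = some d := by
    rw [← hsim]; exact hj0
  have hd : d = false := by
    rcases (hV false false (List.replicate j true) d).1 hj' with h | h <;> exact h
  subst hd
  obtain ⟨u, hu, hp, hq⟩ := finishP P hA hW ([] ++ List.replicate j true) false hj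
  exact ⟨List.replicate j true ++ u,
    allowed_append P _ [] u (allowed_trues P j [] hmin) hu,
    by rwa [← List.append_assoc], by rwa [← List.append_assoc]⟩

lemma reach_true (hV : P.Valid) (hA : P.Agree) (hW : P.WaitFree) :
    Reach P [] true := by
  obtain ⟨k, e, hmin, hk⟩ := soloQ P hW []
  have hk0 : dQ P (List.replicate k false) = some e := by simpa using hk
  have hsim := (falses_qsim P false true true k).2.2
  have hk' : P.decQ (P.run true true (List.replicate k false)).2.2.2 = some e := by
    rw [← hsim]; exact hk0
  have he : e = true := by
    rcases (hV true true (List.replicate k false) e).2 hk' with h | h <;> exact h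
  subst he
  obtain ⟨u, hu, hp, hq⟩ := finishQ P hA hW ([] ++ List.replicate k false) true hk
  exact ⟨List.replicate k false ++ u,
    allowed_append P _ [] u (allowed_falses P k [] hmin) hu,
    by rwa [← List.append_assoc], by rwa [← List.append_assoc]⟩

lemma univalent (hA : P.Agree) (hW : P.WaitFree) :
    ∀ n s, P.boundP - s.count true + (P.boundQ - s.count false) ≤ n →
      ∀ v w, Reach P s v → Reach P s w → v = w := by
  intro n
  induction n using Nat.strong_induction_on with
  | _ n ih =>
    intro s hn v w hv hw
    cases hdp : dP P s with
    | some d =>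
      rw [reach_of_decP P s d v hdp hv, reach_of_decP P s d w hdp hw]
    | none =>
      cases hdq : dQ P s with
      | some d =>
        rw [reach_of_decQ P s d v hdq hv, reach_of_decQ P s d w hdq hw]
      | none =>
        have hcp : s.count true < P.boundP := by
          by_contra hc
          obtain ⟨d, hd⟩ := (hW false true s).1 (by omega)
          have : dP P s = some d := hd
          rw [hdp] at this
          cases this
        have hcq : s.count false < P.boundQ := by
          by_contra hc
          obtain ⟨d, hd⟩ := (hW false true s).2 (by omega)
          have : dQ P s = some d := hd
          rw [hdq] at this
          cases this
        obtain ⟨tv, hav, hpv, hqv⟩ := hv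
        obtain ⟨tw, haw, hpw, hqw⟩ := hw
        cases tv with
        | nil =>
          rw [List.append_nil, hdp] at hpv
          cases hpv
        | cons bv tv' =>
        cases tw with
        | nil =>
          rw [List.append_nil, hdp] at hpw
          cases hpw
        | cons bw tw' =>
        rw [allowed_cons] at hav haw
        have hv' : Reach P (s ++ [bv]) v :=
          ⟨tv', hav.2, by rwa [← cons_shift], by rwa [← cons_shift]⟩
        have hw' : Reach P (s ++ [bw]) w :=
          ⟨tw', haw.2, by rwa [← cons_shift], by rwa [← cons_shift]⟩
        have hms : ∀ b : Bool,
            P.boundP - (s ++ [b]).count true + (P.boundQ - (s ++ [b]).count false) < n := by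
          intro b
          cases b <;>
            simp [List.count_append, List.count_cons, List.count_nil] <;> omega
        obtain ⟨e, het, hef⟩ := crux P hA hW s hdp hdq
        have key : ∀ (b : Bool) (x : Bool), Reach P (s ++ [b]) x → x = e := by
          intro b x hx
          cases b with
          | false => exact ih _ (hms false) (s ++ [false]) le_rfl x e hx hef
          | true => exact ih _ (hms true) (s ++ [true]) le_rfl x e hx het
        rw [key bv v hv', key bw w hw']

end ReadAllImposs

/-- Consensus using only read-all operations (plus writes to one's own
variables with local computation) is impossible in a two-node system. -/
theorem stmt2 :
    ¬ ∃ P : ReadAllProtocol, P.Valid ∧ P.Agree ∧ P.WaitFree := by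
  rintro ⟨P, hV, hA, hW⟩
  exact Bool.false_ne_true
    (ReadAllImposs.univalent P hA hW
      (P.boundP - ([] : List Bool).count true + (P.boundQ - ([] : List Bool).count false))
      [] le_rfl false true
      (ReadAllImposs.reach_false P hV hA hW) (ReadAllImposs.reach_true P hV hA hW))
end

section
/- In the two-node write-all-with-self model, the following protocol solves binary consensus: with three shared variables u, v, w initialized to ω (a value distinct from both inputs), process p atomically writes its input to u and v, process q atomically writes its input to v and w; afterward, p decides its own input if it reads w = ω or v equals p's input, and otherwise decides the value read in v; symmetrically for q. This satisfies validity and agreement for all interleavings of the two atomic multi-write steps. -/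
namespace Stmt5

/-- Shared state: three variables (u, v, w); `none` plays the role of ω. -/
abbrev St := Option Bool × Option Bool × Option Bool

/-- p's atomic step: write input to u and v simultaneously. -/
def stepP (ip : Bool) (s : St) : St := (some ip, some ip, s.2.2)

/-- q's atomic step: write input to v and w simultaneously. -/
def stepQ (iq : Bool) (s : St) : St := (s.1, some iq, some iq)

/-- p's decision after both steps: its own input if w = ω or v equals p's
input, otherwise the value read in v. -/
def decP (ip : Bool) (s : St) : Bool :=
  if s.2.2 = none ∨ s.2.1 = some ip then ip else (s.2.1).getD ip

/-- q's decision, symmetrically (using u in place of w). -/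
def decQ (iq : Bool) (s : St) : Bool :=
  if s.1 = none ∨ s.2.1 = some iq then iq else (s.2.1).getD iq

/-- In the two-node write-all-with-self model, the three-variable protocol
solves binary consensus: for all inputs and both serializations of the two
atomic multi-write steps, the decisions satisfy validity and agreement. -/
theorem stmt5 (ip iq : Bool) (final : St)
    (h : final = stepQ iq (stepP ip (none, none, none)) ∨
         final = stepP ip (stepQ iq (none, none, none))) :
    (decP ip final = ip ∨ decP ip final = iq) ∧
    (decQ iq final = ip ∨ decQ iq final = iq) ∧
    decP ip final = decQ iq final := by
  rcases h with h|h <;> subst h <;> cases ip <;> cases iq <;> simp [stepP, stepQ, decP, decQ]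

end Stmt5
end
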